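/- arXiv:1408.6602 — 3 statements merged into one kernel-verified Lean document; each statement's English description precedes it below -/
import Mathlib

section
/- Let g be a transcendental entire function such that 2(g'(z)^2 + g(z)g''(z)) = b identically for some nonzero constant b. Then a contradiction follows; that is, no transcendental entire function satisfies 2(g'^2 + g g'') = b for a nonzero constant b. -/
open Complex

theorem stmt_0 (g : ℂ → ℂ) (b : ℂ) (hb : b ≠ 0)
    (hg : Differentiable ℂ g)
    (htrans : ¬ ∃ p : Polynomial ℂ, ∀ z, g z = p.eval z)
    (heq : ∀ z : ℂ, 2 * ((deriv g z) ^ 2 + g z * deriv (deriv g) z) = b) :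
    False := by
  have hAOn : AnalyticOnNhd ℂ g Set.univ := analyticOnNhd_univ_iff_differentiable.mpr hg
  have hg1 : Differentiable ℂ (deriv g) :=
    fun z => (hAOn.deriv z (Set.mem_univ z)).differentiableAt
  have hg2 : Differentiable ℂ (deriv (deriv g)) :=
    fun z => ((hAOn.deriv.deriv) z (Set.mem_univ z)).differentiableAt
  set h : ℂ → ℂ := fun z => 2 * g z * deriv g z with hhdef
  have hh : Differentiable ℂ h := (hg.const_mul 2).mul hg1
  have hdh : ∀ z, deriv h z = b := by
    intro z
    have h1 : HasDerivAt h
        (2 * deriv g z * deriv g z + (2 * g z) * deriv (deriv g) z) z := by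
      have h2 : HasDerivAt (fun w => (2 * g w) * deriv g w)
          ((2 * deriv g z) * deriv g z + (2 * g z) * deriv (deriv g) z) z := by
        have ha : HasDerivAt (fun w => 2 * g w) (2 * deriv g z) z :=
          (hg z).hasDerivAt.const_mul 2
        exact ha.mul (hg1 z).hasDerivAt
      simpa [hhdef, mul_assoc] using h2
    rw [h1.deriv]
    linear_combination heq z
  set c : ℂ := h 0 with hcdef
  have hhz : ∀ z, h z = b * z + c := by
    intro z
    have hF : Differentiable ℂ (fun z => h z - b * z) :=
      hh.sub ((differentiable_id).const_mul b)
    have hF' : ∀ z, deriv (fun z => h z - b * z) z = 0 := by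
      intro w
      have h2 : HasDerivAt (fun z => h z - b * z) (deriv h w - b * 1) w :=
        (hh w).hasDerivAt.sub ((hasDerivAt_id w).const_mul b)
      rw [h2.deriv, hdh w]; ring
    have h3 := is_const_of_deriv_eq_zero hF hF' z 0
    simp only [mul_zero, sub_zero] at h3
    linear_combination h3
  set d : ℂ := g 0 ^ 2 with hddef
  -- g z ^ 2 = b/2 z^2 + c z + d
  have hqz : ∀ z, g z ^ 2 = b / 2 * z ^ 2 + c * z + d := by
    intro z
    set G : ℂ → ℂ := fun z => g z ^ 2 - (b / 2 * z ^ 2 + c * z) with hGdef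
    have hGd : Differentiable ℂ G := by
      apply (hg.pow 2).sub
      apply Differentiable.add
      · exact ((differentiable_id.pow 2)).const_mul _
      · exact differentiable_id.const_mul c
    have hG' : ∀ w, deriv G w = 0 := by
      intro w
      have hpoly : HasDerivAt (fun z : ℂ => b / 2 * z ^ 2 + c * z)
          (b / 2 * (2 * w ^ 1) + c * 1) w := by
        have h1 : HasDerivAt (fun z : ℂ => z ^ 2) (2 * w ^ 1) w := by
          simpa using hasDerivAt_pow 2 w
        exact (h1.const_mul _).add ((hasDerivAt_id w).const_mul c)
      have h2 : HasDerivAt G (h w - (b / 2 * (2 * w ^ 1) + c * 1)) w := by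
        have h3 : HasDerivAt (fun w => g w ^ 2) (h w) w := by
          have := ((hg w).hasDerivAt.pow 2)
          have e : (2 : ℕ) * g w ^ (2 - 1) * deriv g w = h w := by
            simp [hhdef]
          rw [e] at this; exact this
        exact h3.sub hpoly
      rw [h2.deriv, hhz w]; ring
    have h3 : g z ^ 2 - (b / 2 * z ^ 2 + c * z)
        = g 0 ^ 2 - (b / 2 * 0 ^ 2 + c * 0) :=
      is_const_of_deriv_eq_zero hGd hG' z 0
    linear_combination h3
  -- the key algebraic identity
  have hkey : ∀ z, 2 * (b / 2 * z ^ 2 + c * z + d) * (2 * (deriv g z) ^ 2 - b)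
      = c ^ 2 - 2 * b * d := by
    intro z
    have h1 := hhz z  -- 2 g g' = b z + c
    have h2 := hqz z  -- g^2 = q
    simp only [hhdef] at h1
    linear_combination (2 * g z * deriv g z + b * z + c) * h1
      - 4 * (deriv g z) ^ 2 * h2
  -- q has a root, so the constant is 0
  set p : Polynomial ℂ := Polynomial.C (b / 2) * Polynomial.X ^ 2 +
      Polynomial.C c * Polynomial.X + Polynomial.C d with hpdef
  have hb2 : b / 2 ≠ 0 := div_ne_zero hb two_ne_zero
  have hpeval : ∀ z, p.eval z = b / 2 * z ^ 2 + c * z + d := by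
    intro z; simp [hpdef]
  have hpdeg : p.degree = 2 := Polynomial.degree_quadratic hb2
  have hpne : p ≠ 0 := fun h => by simp [h] at hpdeg
  obtain ⟨z0, hz0⟩ := Complex.exists_root (by rw [hpdeg]; norm_num : 0 < p.degree)
  have hK : c ^ 2 - 2 * b * d = 0 := by
    have h1 := hkey z0
    have hz0' : Polynomial.eval z0 p = 0 := hz0
    rw [← hpeval z0, hz0'] at h1
    linear_combination -h1
  have hkey2 : ∀ z, p.eval z * (2 * (deriv g z) ^ 2 - b) = 0 := by
    intro z
    rw [hpeval z]
    have := hkey z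
    rw [hK] at this
    linear_combination this / 2
  -- the root set is finite, complement dense
  have hfin : {z : ℂ | p.IsRoot z}.Finite := p.finite_setOf_isRoot hpne
  have hdense : Dense {z : ℂ | p.IsRoot z}ᶜ := hfin.countable.dense_compl ℂ
  -- 2 g'^2 = b everywhere
  have hgb : ∀ z, 2 * (deriv g z) ^ 2 = b := by
    have hext : (fun z => 2 * (deriv g z) ^ 2) = fun _ => b := by
      apply Continuous.ext_on hdense
      · exact (continuous_const.mul ((hg1.continuous).pow 2))
      · exact continuous_const
      · intro z hz
        have hz' : p.eval z ≠ 0 := hz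
        have := hkey2 z
        rcases mul_eq_zero.mp this with h | h
        · exact absurd h hz'
        · simp only []
          linear_combination h
    intro z; exact congrFun hext z
  -- hence g * g'' = 0
  have hggpp : ∀ z, g z * deriv (deriv g) z = 0 := by
    intro z
    have := heq z
    rw [← hgb z] at this
    linear_combination this / 2
  -- g'' = 0 everywhere
  have hgpp : ∀ z, deriv (deriv g) z = 0 := by
    have hext : (fun z => deriv (deriv g) z) = fun _ => (0 : ℂ) := by
      apply Continuous.ext_on hdense
      · exact hg2.continuous
      · exact continuous_const
      · intro z hz
        have hz' : p.eval z ≠ 0 := hz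
        have hgz : g z ≠ 0 := by
          intro h0
          apply hz'
          rw [hpeval z, ← hqz z, h0]; ring
        have := hggpp z
        exact (mul_eq_zero.mp this).resolve_left hgz
    intro z; exact congrFun hext z
  -- g' constant
  have hgpconst : ∀ z, deriv g z = deriv g 0 :=
    fun z => is_const_of_deriv_eq_zero hg1 hgpp z 0
  -- g affine
  set a : ℂ := deriv g 0 with hadef
  have hgaff : ∀ z, g z = a * z + g 0 := by
    intro z
    have hF : Differentiable ℂ (fun z => g z - a * z) :=
      hg.sub (differentiable_id.const_mul a)
    have hF' : ∀ w, deriv (fun z => g z - a * z) w = 0 := by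
      intro w
      have h2 : HasDerivAt (fun z => g z - a * z) (deriv g w - a * 1) w :=
        (hg w).hasDerivAt.sub ((hasDerivAt_id w).const_mul a)
      rw [h2.deriv, hgpconst w]; ring
    have h3 := is_const_of_deriv_eq_zero hF hF' z 0
    simp only [mul_zero, sub_zero] at h3
    linear_combination h3
  exact htrans ⟨Polynomial.C a * Polynomial.X + Polynomial.C (g 0), by
    intro z; rw [hgaff z]; simp⟩
end

section
/- Let g(z) = c₁ e^{λz} + c₂ e^{-λz} with c₁, c₂, λ nonzero, and let a ≠ 0. Suppose that whenever e^{λz} = A (where A² = -c₂/c₁) one has g'(z) = a, and that every zero of e^{λz} - A is a multiple zero of g' - a. Then g'(z) - a = A₁ e^{-λz}(e^{λz} - A)² for some nonzero constant A₁, and consequently g'(z) = a if and only if e^{λz} = A. -/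
/-!
Since `c₂ = -c₁ A²`, at any point where `e^{λz} = A` one has `g' = λ (c₁ A - c₂ / A) = 2 c₁ λ A`,
so the hypothesis pins down `a = 2 c₁ λ A`. With `w = e^{λz}` this makes
`g' - a = λ (c₁ w + c₁ A² / w - 2 c₁ A) = c₁ λ w⁻¹ (w - A)²`, a perfect square in `w - A`;
as `c₁ λ w⁻¹ ≠ 0`, the equation `g' = a` holds exactly where `w = A`.
-/

open Complex

lemma mul_sub_mul_inv_sub_eq_mul_inv_mul_sq {K : Type*} [Field K] {c₁ c₂ A w : K}
    (hc : c₂ = -c₁ * A ^ 2) (hw : w ≠ 0) :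
    c₁ * w - c₂ * w⁻¹ - (c₁ * A - c₂ * A⁻¹) = c₁ * w⁻¹ * (w - A) ^ 2 := by
  subst hc
  field_simp
  ring

lemma hasDerivAt_const_mul_exp_add_const_mul_exp_neg (c₁ c₂ l z : ℂ) :
    HasDerivAt (fun z => c₁ * exp (l * z) + c₂ * exp (-(l * z)))
      (l * (c₁ * exp (l * z) - c₂ * exp (-(l * z)))) z := by
  have hlin : HasDerivAt (fun z : ℂ => l * z) l z := by
    simpa using (hasDerivAt_id z).const_mul l
  exact ((hlin.cexp.const_mul c₁).add (hlin.neg.cexp.const_mul c₂)).congr_deriv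
    (by simp only [Pi.neg_apply]; ring)

lemma exists_exp_mul_eq {l A : ℂ} (hl : l ≠ 0) (hA : A ≠ 0) : ∃ z, exp (l * z) = A :=
  ⟨log A / l, by rw [mul_div_cancel₀ _ hl, exp_log hA]⟩

theorem stmt_7_general (c₁ c₂ l a A : ℂ) (hc₁ : c₁ ≠ 0) (hc₂ : c₂ ≠ 0) (hl : l ≠ 0)
    (hA : A ^ 2 = -c₂ / c₁)
    (g : ℂ → ℂ)
    (hg : ∀ z, g z = c₁ * Complex.exp (l * z) + c₂ * Complex.exp (-(l * z)))
    (h1 : ∀ z : ℂ, Complex.exp (l * z) = A → deriv g z = a) :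
    ∃ A₁ : ℂ, A₁ ≠ 0 ∧
      (∀ z : ℂ, deriv g z - a =
        A₁ * Complex.exp (-(l * z)) * (Complex.exp (l * z) - A) ^ 2) ∧
      (∀ z : ℂ, deriv g z = a ↔ Complex.exp (l * z) = A) := by
  have hc : c₂ = -c₁ * A ^ 2 := by
    field_simp at hA
    linear_combination hA
  have hA₀ : A ≠ 0 := by
    rintro rfl
    exact hc₂ (by simpa using hc)
  have hg' z : deriv g z = l * (c₁ * exp (l * z) - c₂ * exp (-(l * z))) := by
    rw [funext hg]
    exact (hasDerivAt_const_mul_exp_add_const_mul_exp_neg c₁ c₂ l z).deriv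
  obtain ⟨z₀, hz₀⟩ := exists_exp_mul_eq hl hA₀
  have ha : a = l * (c₁ * A - c₂ * A⁻¹) := by
    rw [← h1 z₀ hz₀, hg', exp_neg, hz₀]
  have hsq z : deriv g z - a = c₁ * l * exp (-(l * z)) * (exp (l * z) - A) ^ 2 := by
    rw [hg', ha, ← mul_sub, exp_neg,
      mul_sub_mul_inv_sub_eq_mul_inv_mul_sq hc (exp_ne_zero _)]
    ring
  refine ⟨c₁ * l, mul_ne_zero hc₁ hl, hsq, fun z => ?_⟩
  rw [← sub_eq_zero, hsq, ← sub_eq_zero (a := exp (l * z))]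
  simp [hc₁, hl, exp_ne_zero]

theorem stmt_7 (c₁ c₂ l a A : ℂ) (hc₁ : c₁ ≠ 0) (hc₂ : c₂ ≠ 0) (hl : l ≠ 0) (ha : a ≠ 0)
    (hA : A ^ 2 = -c₂ / c₁)
    (g : ℂ → ℂ)
    (hg : ∀ z, g z = c₁ * Complex.exp (l * z) + c₂ * Complex.exp (-(l * z)))
    (h1 : ∀ z : ℂ, Complex.exp (l * z) = A → deriv g z = a)
    (hmult : ∀ z : ℂ, Complex.exp (l * z) = A → deriv (deriv g) z = 0) :
    ∃ A₁ : ℂ, A₁ ≠ 0 ∧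
      (∀ z : ℂ, deriv g z - a =
        A₁ * Complex.exp (-(l * z)) * (Complex.exp (l * z) - A) ^ 2) ∧
      (∀ z : ℂ, deriv g z = a ↔ Complex.exp (l * z) = A) :=
  stmt_7_general c₁ c₂ l a A hc₁ hc₂ hl hA g hg h1
end

section
/- Let g(z) = c₁ e^{λz} + c₂ e^{-λz} with c₁, c₂, λ, a nonzero, A² = -c₂/c₁, and suppose g'(z) - a = A₁ e^{-λz}(e^{λz} - A)² and g'(z) + a = A₁' e^{-λz}(e^{λz} + A)² for nonzero constants A₁, A₁'. Then g(z) = 0 if and only if g'(z) ∈ {a, -a}. -/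
open Complex

/-!
Put `w = exp (l z) ≠ 0`. Since `c₂ = -c₁ A²`, `g z = c₁ w⁻¹ (w - A) (w + A)`, so `g z = 0` exactly
when `w = ± A`; the two factorizations of `g' ∓ a` vanish exactly at `w = A` and at `w = -A`.
-/

theorem mul_add_mul_inv_eq_zero_iff {K : Type*} [Field K] {c₁ c₂ A w : K} (hc₁ : c₁ ≠ 0)
    (hA : A ^ 2 = -c₂ / c₁) (hw : w ≠ 0) :
    c₁ * w + c₂ * w⁻¹ = 0 ↔ w = A ∨ w = -A := by
  have hfactor : c₁ * w + c₂ * w⁻¹ = c₁ * w⁻¹ * (w ^ 2 - A ^ 2) := by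
    rw [hA]
    field_simp
    ring
  simp [hfactor, hc₁, hw, sub_eq_zero, sq_eq_sq_iff_eq_or_eq_neg]

theorem mul_inv_mul_sub_sq_eq_zero_iff {K : Type*} [Field K] {B A w : K} (hB : B ≠ 0)
    (hw : w ≠ 0) : B * w⁻¹ * (w - A) ^ 2 = 0 ↔ w = A := by
  simp [hB, hw, sub_eq_zero]

theorem stmt_16_general (c₁ c₂ l a A A₁ A₁' : ℂ) (hc₁ : c₁ ≠ 0)
    (hA₁ : A₁ ≠ 0) (hA₁' : A₁' ≠ 0) (hA : A ^ 2 = -c₂ / c₁)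
    (g : ℂ → ℂ)
    (hg : ∀ z, g z = c₁ * Complex.exp (l * z) + c₂ * Complex.exp (-(l * z)))
    (hfac : ∀ z : ℂ, deriv g z - a =
      A₁ * Complex.exp (-(l * z)) * (Complex.exp (l * z) - A) ^ 2)
    (hfac' : ∀ z : ℂ, deriv g z + a =
      A₁' * Complex.exp (-(l * z)) * (Complex.exp (l * z) + A) ^ 2) :
    ∀ z : ℂ, g z = 0 ↔ (deriv g z = a ∨ deriv g z = -a) := by
  intro z
  have hw : exp (l * z) ≠ 0 := exp_ne_zero _
  have hplus : deriv g z = a ↔ exp (l * z) = A := by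
    rw [← sub_eq_zero, hfac, exp_neg, mul_inv_mul_sub_sq_eq_zero_iff hA₁ hw]
  have hminus : deriv g z = -a ↔ exp (l * z) = -A := by
    rw [eq_neg_iff_add_eq_zero, hfac', exp_neg, ← sub_neg_eq_add,
      mul_inv_mul_sub_sq_eq_zero_iff hA₁' hw]
  rw [hplus, hminus, hg, exp_neg, mul_add_mul_inv_eq_zero_iff hc₁ hA hw]

theorem stmt_16 (c₁ c₂ l a A A₁ A₁' : ℂ) (hc₁ : c₁ ≠ 0) (hc₂ : c₂ ≠ 0) (hl : l ≠ 0)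
    (ha : a ≠ 0) (hA₁ : A₁ ≠ 0) (hA₁' : A₁' ≠ 0) (hA : A ^ 2 = -c₂ / c₁)
    (g : ℂ → ℂ)
    (hg : ∀ z, g z = c₁ * Complex.exp (l * z) + c₂ * Complex.exp (-(l * z)))
    (hfac : ∀ z : ℂ, deriv g z - a =
      A₁ * Complex.exp (-(l * z)) * (Complex.exp (l * z) - A) ^ 2)
    (hfac' : ∀ z : ℂ, deriv g z + a =
      A₁' * Complex.exp (-(l * z)) * (Complex.exp (l * z) + A) ^ 2) :
    ∀ z : ℂ, g z = 0 ↔ (deriv g z = a ∨ deriv g z = -a) :=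
  stmt_16_general c₁ c₂ l a A A₁ A₁' hc₁ hA₁ hA₁' hA g hg hfac hfac'
end
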